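/- Let f : V → W be a linear map of finite-dimensional vector spaces over a field K, and let k be a natural number. Then the rank of the induced map Λ^k f : Λ^k V → Λ^k W on k-th exterior powers equals the binomial coefficient C(rank(f), k). -/

import Mathlib

open Module

/-!
Write `f` as the surjection `V → im f` followed by the inclusion `im f → W`. By functoriality
`Λᵏ f` is `Λᵏ` of the inclusion after `Λᵏ` of the surjection; the latter is surjective and the
former injective (over a field the inclusion has a retraction), so `im Λᵏ f ≅ Λᵏ (im f)`, which
has dimension `C(rank f, k)`.
-/

namespace exteriorPower

variable {R M N : Type*} [CommRing R] [AddCommGroup M] [Module R M] [AddCommGroup N] [Module R N]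

theorem coe_map_apply (n : ℕ) (f : M →ₗ[R] N) (x : ⋀[R]^n M) :
    (map n f x : ExteriorAlgebra R N) = ExteriorAlgebra.map f x := by
  suffices (⋀[R]^n N).subtype ∘ₗ map n f =
      (ExteriorAlgebra.map f).toLinearMap ∘ₗ (⋀[R]^n M).subtype from
    LinearMap.congr_fun this x
  ext m
  simp [ExteriorAlgebra.map_apply_ιMulti]

theorem range_map_eq_range_map_subtype (n : ℕ) (f : M →ₗ[R] N) :
    LinearMap.range (map n f) = LinearMap.range (map n (LinearMap.range f).subtype) := by
  conv_lhs => rw [← f.subtype_comp_codRestrict _ f.mem_range_self, map_comp]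
  exact LinearMap.range_comp_of_range_eq_top _
    (LinearMap.range_eq_top.2 (map_surjective f.surjective_rangeRestrict))

theorem finrank_range_map {K V W : Type*} [Field K] [AddCommGroup V] [Module K V]
    [FiniteDimensional K V] [AddCommGroup W] [Module K W] (n : ℕ) (f : V →ₗ[K] W) :
    finrank K (LinearMap.range (map n f)) = (finrank K (LinearMap.range f)).choose n := by
  rw [range_map_eq_range_map_subtype, LinearMap.finrank_range_of_inj
    (map_injective_field (LinearMap.range f).injective_subtype), finrank_eq]

end exteriorPower

theorem rank_exteriorPower_map_eq_choose_general
    {K V W : Type*} [Field K] [AddCommGroup V] [Module K V] [FiniteDimensional K V]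
    [AddCommGroup W] [Module K W]
    (k : ℕ) (f : V →ₗ[K] W)
    (g : ⋀[K]^k V →ₗ[K] ⋀[K]^k W)
    (hg : ∀ x : ⋀[K]^k V, (g x : ExteriorAlgebra K W) = ExteriorAlgebra.map f x) :
    finrank K (LinearMap.range g) = (finrank K (LinearMap.range f)).choose k := by
  have hg_map : g = exteriorPower.map k f :=
    LinearMap.ext fun x ↦ Subtype.ext <| (hg x).trans (exteriorPower.coe_map_apply k f x).symm
  rw [hg_map, exteriorPower.finrank_range_map]

/-- The rank of the map `Λᵏ f` induced on `k`-th exterior powers by a linear map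
`f : V → W` of finite-dimensional vector spaces equals the binomial coefficient
`C(rank f, k)`. Here `g` is the induced map, characterized by compatibility with
the functorial map `ExteriorAlgebra.map f` of exterior algebras. -/
theorem rank_exteriorPower_map_eq_choose
    {K V W : Type*} [Field K] [AddCommGroup V] [Module K V] [FiniteDimensional K V]
    [AddCommGroup W] [Module K W] [FiniteDimensional K W]
    (k : ℕ) (f : V →ₗ[K] W)
    (g : ⋀[K]^k V →ₗ[K] ⋀[K]^k W)
    (hg : ∀ x : ⋀[K]^k V, (g x : ExteriorAlgebra K W) = ExteriorAlgebra.map f x) :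
    finrank K (LinearMap.range g) = (finrank K (LinearMap.range f)).choose k :=
  rank_exteriorPower_map_eq_choose_general k f g hg
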